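/- Let ℓ ≥ 0 be an integer, set ρ_j = ℓ/2 + 1 − j for j = 1,…,ℓ+1, and define the Baxter kernel Q(x,y|s) = 2^{ℓ+1} exp( Σ_{j=1}^{ℓ+1}(is − ρ_j)(x_j − y_j) − π Σ_{k=1}^{ℓ}( e^{2(x_k−y_k)} + e^{2(y_{k+1}−x_k)} ) − π e^{2(x_{ℓ+1}−y_{ℓ+1})} ). Then for every s ∈ ℂ and all x, y ∈ ℝ^{ℓ+1} the kernel satisfies the differential identity Σ_{j=1}^{ℓ+1} [ −(1/2)(∂/∂x_j + ρ_j)² Q ](x,y|s) + 4π² Σ_{k=1}^{ℓ} e^{2(x_{k+1}−x_k)} Q(x,y|s) = Σ_{j=1}^{ℓ+1} [ −(1/2)(∂/∂y_j − ρ_j)² Q ](x,y|s) + 4π² Σ_{k=1}^{ℓ} e^{2(y_{k+1}−y_k)} Q(x,y|s). -/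

import Mathlib

/-- The integral kernel of the Baxter `Q`-operator for the quantum
`gl_{ℓ+1}`-Toda chain, with `ρ_j = ℓ/2 + 1 − j`. -/
noncomputable def baxterKernel (ℓ : ℕ) (x y : Fin (ℓ+1) → ℝ) (s : ℂ) : ℂ :=
  2 ^ (ℓ+1) *
    Complex.exp ((∑ j : Fin (ℓ+1),
        (Complex.I * s - ((ℓ : ℂ)/2 + 1 - ((j : ℕ) + 1))) * ((x j - y j : ℝ) : ℂ))
      - (Real.pi : ℂ) * ∑ k : Fin ℓ,
          ((Real.exp (2 * (x k.castSucc - y k.castSucc)) : ℂ)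
            + (Real.exp (2 * (y k.succ - x k.castSucc)) : ℂ))
      - (Real.pi : ℂ) * (Real.exp (2 * (x (Fin.last ℓ) - y (Fin.last ℓ))) : ℂ))

/-- Partial derivative of `f : ℝ^{ℓ+1} → ℂ` in the `j`-th coordinate. -/
noncomputable def pderiv {m : ℕ} (j : Fin m) (f : (Fin m → ℝ) → ℂ) :
    (Fin m → ℝ) → ℂ :=
  fun x => deriv (fun u : ℝ => f (Function.update x j u)) (x j)

/-- The first-order operator `D_j = ∂/∂x_j + ρ_j` with `ρ_j = ℓ/2 + 1 − j`. -/
noncomputable def shiftedD (ℓ : ℕ) (ρ : Fin (ℓ+1) → ℂ) (j : Fin (ℓ+1))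
    (f : (Fin (ℓ+1) → ℝ) → ℂ) : (Fin (ℓ+1) → ℝ) → ℂ :=
  fun x => pderiv j f x + ρ j * f x

/-!
Write `Q = 2^{ℓ+1} e^E`. As a function of `x`, the exponent `E` is a sum `∑_j φ_j(x_j)` of
functions of single coordinates once the coupling `e^{2(y_{j+1} - x_j)}` is attached to `x_j`;
as a function of `y` it separates in the same way with that coupling attached to `y_{j+1}`.
Hence `(∂_{x_j} + ρ_j) Q = ψ_j Q` with `ψ_j = is - 2π a_j + 2π b_j`, where
`a_j = e^{2(x_j - y_j)}` and `b_j = e^{2(y_{j+1} - x_j)}` (`b_ℓ = 0`), and differentiating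
once more gives `(∂_{x_j} + ρ_j)² Q = (ψ_j² - 4π(a_j + b_j)) Q`. The `y`-side is the same with
`b_j` replaced by `c_j = e^{2(y_j - x_{j-1})}` (`c_0 = 0`). The families `(b_j)` and `(c_j)` are
one family shifted by one index, so `∑ b = ∑ c` and `∑ b² = ∑ c²`; the remaining cross terms
`a_j c_j` and `a_j b_j` are exactly the Toda potentials `e^{2(x_{k+1} - x_k)}` and
`e^{2(y_{k+1} - y_k)}`.
-/

open Complex Finset Function

theorem hasDerivAt_sum_apply_update {ι E : Type*} [Fintype ι] [DecidableEq ι]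
    [NormedAddCommGroup E] [NormedSpace ℝ E] {φ : ι → ℝ → E} {x : ι → ℝ} {j : ι} {d : E}
    (h : HasDerivAt (φ j) d (x j)) :
    HasDerivAt (fun u => ∑ i, φ i (update x j u i)) d (x j) := by
  simp only [apply_update (fun i => φ i), sum_update_of_mem (mem_univ j)]
  exact h.add_const _

theorem hasDerivAt_ofReal_exp_mul_sub_const (a c t : ℝ) :
    HasDerivAt (fun u : ℝ => (Real.exp (a * (u - c)) : ℂ)) (a * Real.exp (a * (t - c))) t := by
  have h : HasDerivAt (fun u => a * (u - c)) a t := by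
    simpa using ((hasDerivAt_id t).sub_const c).const_mul a
  exact h.exp.ofReal_comp.congr_deriv (by push_cast; ring)

theorem hasDerivAt_ofReal_exp_mul_const_sub (a c t : ℝ) :
    HasDerivAt (fun u : ℝ => (Real.exp (a * (c - u)) : ℂ)) (-a * Real.exp (a * (c - t))) t := by
  have h : HasDerivAt (fun u => a * (c - u)) (-a) t := by
    simpa using ((hasDerivAt_id t).const_sub c).const_mul a
  exact h.exp.ofReal_comp.congr_deriv (by push_cast; ring)

theorem shiftedD_shiftedD_eq {ℓ : ℕ} {ρ : Fin (ℓ+1) → ℂ} {j : Fin (ℓ+1)}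
    {f ψ : (Fin (ℓ+1) → ℝ) → ℂ} {ψ' : ℂ} {x : Fin (ℓ+1) → ℝ}
    (hf : ∀ x', HasDerivAt (fun u => f (update x' j u)) ((ψ x' - ρ j) * f x') (x' j))
    (hψ : HasDerivAt (fun u => ψ (update x j u)) ψ' (x j)) :
    shiftedD ℓ ρ j (shiftedD ℓ ρ j f) x = (ψ' + ψ x ^ 2) * f x := by
  have hD : shiftedD ℓ ρ j f = fun x' => ψ x' * f x' := by
    funext x'
    rw [shiftedD, pderiv, (hf x').deriv]
    ring
  have hprod := hψ.fun_mul (hf x)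
  rw [update_eq_self] at hprod
  rw [hD]
  simp only [shiftedD, pderiv, hprod.deriv]
  ring

theorem sum_toda_quadratic_eq {ι : Type*} [Fintype ι] (κ μ : ℂ) (a b c : ι → ℂ)
    (h₁ : ∑ j, b j = ∑ j, c j) (h₂ : ∑ j, b j ^ 2 = ∑ j, c j ^ 2) :
    ∑ j, -(1/2 : ℂ) * (-4 * κ * (a j + b j) + (μ - 2 * κ * a j + 2 * κ * b j) ^ 2)
        + 4 * κ ^ 2 * ∑ j, a j * c j
      = ∑ j, -(1/2 : ℂ) * (-4 * κ * (a j + c j) + (μ - 2 * κ * a j + 2 * κ * c j) ^ 2)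
        + 4 * κ ^ 2 * ∑ j, a j * b j := by
  rw [← sub_eq_zero]
  have hterm : ∀ j, -(1/2 : ℂ) * (-4 * κ * (a j + b j) + (μ - 2 * κ * a j + 2 * κ * b j) ^ 2)
        + 4 * κ ^ 2 * (a j * c j)
      - (-(1/2 : ℂ) * (-4 * κ * (a j + c j) + (μ - 2 * κ * a j + 2 * κ * c j) ^ 2)
        + 4 * κ ^ 2 * (a j * b j))
      = (2 * κ - 2 * κ * μ) * (b j - c j) - 2 * κ ^ 2 * (b j ^ 2 - c j ^ 2) := fun j => by ring
  calc _ = ∑ j, ((2 * κ - 2 * κ * μ) * (b j - c j) - 2 * κ ^ 2 * (b j ^ 2 - c j ^ 2)) := by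
        simp only [← hterm, sum_sub_distrib, sum_add_distrib, mul_sum]
    _ = 0 := by simp only [sum_sub_distrib, ← mul_sum, h₁, h₂, sub_self, mul_zero]

namespace BaxterKernel

variable {ℓ : ℕ}

noncomputable abbrev rho (ℓ : ℕ) (j : Fin (ℓ+1)) : ℂ := (ℓ : ℂ)/2 + 1 - ((j : ℕ) + 1)

noncomputable def nextWeight (y : Fin (ℓ+1) → ℝ) (j : Fin (ℓ+1)) (t : ℝ) : ℂ :=
  Fin.snoc (α := fun _ => ℂ) (fun k : Fin ℓ => (Real.exp (2 * (y k.succ - t)) : ℂ)) 0 j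

noncomputable def prevWeight (x : Fin (ℓ+1) → ℝ) (j : Fin (ℓ+1)) (t : ℝ) : ℂ :=
  Fin.cons (α := fun _ => ℂ) 0 (fun k : Fin ℓ => (Real.exp (2 * (t - x k.castSucc)) : ℂ)) j

theorem hasDerivAt_nextWeight (y : Fin (ℓ+1) → ℝ) (j : Fin (ℓ+1)) (t : ℝ) :
    HasDerivAt (fun t => nextWeight y j t) (-2 * nextWeight y j t) t := by
  cases j using Fin.lastCases with
  | last => simpa [nextWeight] using hasDerivAt_const t (0 : ℂ)
  | cast k =>
    simpa only [nextWeight, Fin.snoc_castSucc, ofReal_neg, ofReal_ofNat]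
      using hasDerivAt_ofReal_exp_mul_const_sub 2 (y k.succ) t

theorem hasDerivAt_prevWeight (x : Fin (ℓ+1) → ℝ) (j : Fin (ℓ+1)) (t : ℝ) :
    HasDerivAt (fun t => prevWeight x j t) (2 * prevWeight x j t) t := by
  cases j using Fin.cases with
  | zero => simpa [prevWeight] using hasDerivAt_const t (0 : ℂ)
  | succ k =>
    simpa only [prevWeight, Fin.cons_succ, ofReal_ofNat]
      using hasDerivAt_ofReal_exp_mul_sub_const 2 (x k.castSucc) t

theorem sum_nextWeight_pow (x y : Fin (ℓ+1) → ℝ) {n : ℕ} (hn : n ≠ 0) :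
    ∑ j, nextWeight y j (x j) ^ n
      = ∑ k : Fin ℓ, (Real.exp (2 * (y k.succ - x k.castSucc)) : ℂ) ^ n := by
  simp [Fin.sum_univ_castSucc, nextWeight, hn]

theorem sum_prevWeight_pow (x y : Fin (ℓ+1) → ℝ) {n : ℕ} (hn : n ≠ 0) :
    ∑ j, prevWeight x j (y j) ^ n
      = ∑ k : Fin ℓ, (Real.exp (2 * (y k.succ - x k.castSucc)) : ℂ) ^ n := by
  simp [Fin.sum_univ_succ, prevWeight, hn]

theorem sum_mul_nextWeight (x y : Fin (ℓ+1) → ℝ) :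
    ∑ j, (Real.exp (2 * (x j - y j)) : ℂ) * nextWeight y j (x j)
      = ∑ k : Fin ℓ, (Real.exp (2 * (y k.succ - y k.castSucc)) : ℂ) := by
  simp only [Fin.sum_univ_castSucc, nextWeight, Fin.snoc_castSucc, Fin.snoc_last, mul_zero,
    add_zero, ← ofReal_mul, ← Real.exp_add]
  exact sum_congr rfl fun k _ => by congr 2; ring

theorem sum_mul_prevWeight (x y : Fin (ℓ+1) → ℝ) :
    ∑ j, (Real.exp (2 * (x j - y j)) : ℂ) * prevWeight x j (y j)
      = ∑ k : Fin ℓ, (Real.exp (2 * (x k.succ - x k.castSucc)) : ℂ) := by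
  simp only [Fin.sum_univ_succ, prevWeight, Fin.cons_succ, Fin.cons_zero, mul_zero,
    zero_add, ← ofReal_mul, ← Real.exp_add]
  exact sum_congr rfl fun k _ => by congr 2; ring

noncomputable def xPart (s : ℂ) (y : Fin (ℓ+1) → ℝ) (j : Fin (ℓ+1)) (t : ℝ) : ℂ :=
  (I * s - rho ℓ j) * ((t - y j : ℝ) : ℂ)
    - Real.pi * ((Real.exp (2 * (t - y j)) : ℂ) + nextWeight y j t)

noncomputable def yPart (s : ℂ) (x : Fin (ℓ+1) → ℝ) (j : Fin (ℓ+1)) (t : ℝ) : ℂ :=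
  (I * s - rho ℓ j) * ((x j - t : ℝ) : ℂ)
    - Real.pi * ((Real.exp (2 * (x j - t)) : ℂ) + prevWeight x j t)

theorem baxterKernel_eq_exp_sum_xPart (s : ℂ) (x y : Fin (ℓ+1) → ℝ) :
    baxterKernel ℓ x y s = 2 ^ (ℓ+1) * exp (∑ j, xPart s y j (x j)) := by
  have ha := Fin.sum_univ_castSucc (fun j => (Real.exp (2 * (x j - y j)) : ℂ))
  have hb := sum_nextWeight_pow x y one_ne_zero
  simp only [pow_one] at hb
  simp only [baxterKernel, xPart, sum_sub_distrib, sum_add_distrib, ← mul_sum, ha, hb]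
  ring

theorem baxterKernel_eq_exp_sum_yPart (s : ℂ) (x y : Fin (ℓ+1) → ℝ) :
    baxterKernel ℓ x y s = 2 ^ (ℓ+1) * exp (∑ j, yPart s x j (y j)) := by
  have ha := Fin.sum_univ_castSucc (fun j => (Real.exp (2 * (x j - y j)) : ℂ))
  have hc := sum_prevWeight_pow x y one_ne_zero
  simp only [pow_one] at hc
  simp only [baxterKernel, yPart, sum_sub_distrib, sum_add_distrib, ← mul_sum, ha, hc]
  ring

theorem hasDerivAt_xPart (s : ℂ) (y : Fin (ℓ+1) → ℝ) (j : Fin (ℓ+1)) (t : ℝ) :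
    HasDerivAt (xPart s y j)
      (I * s - rho ℓ j - 2 * Real.pi * Real.exp (2 * (t - y j))
        + 2 * Real.pi * nextWeight y j t) t := by
  have hlin : HasDerivAt (fun u : ℝ => ((u - y j : ℝ) : ℂ)) 1 t := by
    simpa using ((hasDerivAt_id t).sub_const (y j)).ofReal_comp
  have h := (hlin.const_mul (I * s - rho ℓ j)).sub
    (((hasDerivAt_ofReal_exp_mul_sub_const 2 (y j) t).add (hasDerivAt_nextWeight y j t)).const_mul
      (Real.pi : ℂ))
  exact h.congr_deriv (by push_cast; ring)

theorem hasDerivAt_yPart (s : ℂ) (x : Fin (ℓ+1) → ℝ) (j : Fin (ℓ+1)) (t : ℝ) :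
    HasDerivAt (yPart s x j)
      (-(I * s - rho ℓ j) + 2 * Real.pi * Real.exp (2 * (x j - t))
        - 2 * Real.pi * prevWeight x j t) t := by
  have hlin : HasDerivAt (fun u : ℝ => ((x j - u : ℝ) : ℂ)) (-1) t := by
    simpa using ((hasDerivAt_id t).const_sub (x j)).ofReal_comp
  have h := (hlin.const_mul (I * s - rho ℓ j)).sub
    (((hasDerivAt_ofReal_exp_mul_const_sub 2 (x j) t).add (hasDerivAt_prevWeight x j t)).const_mul
      (Real.pi : ℂ))
  exact h.congr_deriv (by push_cast; ring)

theorem hasDerivAt_baxterKernel_x (s : ℂ) (x y : Fin (ℓ+1) → ℝ) (j : Fin (ℓ+1)) :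
    HasDerivAt (fun u => baxterKernel ℓ (update x j u) y s)
      ((I * s - rho ℓ j - 2 * Real.pi * Real.exp (2 * (x j - y j))
        + 2 * Real.pi * nextWeight y j (x j)) * baxterKernel ℓ x y s) (x j) := by
  simp only [baxterKernel_eq_exp_sum_xPart]
  have h := ((hasDerivAt_sum_apply_update (hasDerivAt_xPart s y j (x j))).cexp).const_mul
    ((2 : ℂ) ^ (ℓ+1))
  rw [update_eq_self] at h
  exact h.congr_deriv (by ring)

theorem hasDerivAt_baxterKernel_y (s : ℂ) (x y : Fin (ℓ+1) → ℝ) (j : Fin (ℓ+1)) :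
    HasDerivAt (fun u => baxterKernel ℓ x (update y j u) s)
      ((-(I * s - rho ℓ j) + 2 * Real.pi * Real.exp (2 * (x j - y j))
        - 2 * Real.pi * prevWeight x j (y j)) * baxterKernel ℓ x y s) (y j) := by
  simp only [baxterKernel_eq_exp_sum_yPart]
  have h := ((hasDerivAt_sum_apply_update (hasDerivAt_yPart s x j (y j))).cexp).const_mul
    ((2 : ℂ) ^ (ℓ+1))
  rw [update_eq_self] at h
  exact h.congr_deriv (by ring)

theorem shiftedD_sq_baxterKernel_x (s : ℂ) (x y : Fin (ℓ+1) → ℝ) (j : Fin (ℓ+1)) :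
    shiftedD ℓ (rho ℓ) j (shiftedD ℓ (rho ℓ) j (fun x' => baxterKernel ℓ x' y s)) x
      = (-4 * Real.pi * (Real.exp (2 * (x j - y j)) + nextWeight y j (x j))
          + (I * s - 2 * Real.pi * Real.exp (2 * (x j - y j))
            + 2 * Real.pi * nextWeight y j (x j)) ^ 2) * baxterKernel ℓ x y s := by
  have hψ := (((hasDerivAt_ofReal_exp_mul_sub_const 2 (y j) (x j)).const_mul
    (2 * Real.pi : ℂ)).const_sub (I * s)).fun_add
    ((hasDerivAt_nextWeight y j (x j)).const_mul (2 * Real.pi : ℂ))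
  rw [shiftedD_shiftedD_eq (ψ := fun x' => I * s - 2 * Real.pi * Real.exp (2 * (x' j - y j))
      + 2 * Real.pi * nextWeight y j (x' j))
    (fun x' => (hasDerivAt_baxterKernel_x s x' y j).congr_deriv (by ring))
    (by simpa only [update_self] using hψ)]
  push_cast
  ring

theorem shiftedD_sq_baxterKernel_y (s : ℂ) (x y : Fin (ℓ+1) → ℝ) (j : Fin (ℓ+1)) :
    shiftedD ℓ (fun j => -rho ℓ j) j
        (shiftedD ℓ (fun j => -rho ℓ j) j (fun y' => baxterKernel ℓ x y' s)) y
      = (-4 * Real.pi * (Real.exp (2 * (x j - y j)) + prevWeight x j (y j))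
          + (I * s - 2 * Real.pi * Real.exp (2 * (x j - y j))
            + 2 * Real.pi * prevWeight x j (y j)) ^ 2) * baxterKernel ℓ x y s := by
  have hψ := (((hasDerivAt_ofReal_exp_mul_const_sub 2 (x j) (y j)).const_mul
    (2 * Real.pi : ℂ)).const_add (-(I * s))).fun_sub
    ((hasDerivAt_prevWeight x j (y j)).const_mul (2 * Real.pi : ℂ))
  rw [shiftedD_shiftedD_eq (ψ := fun y' => -(I * s) + 2 * Real.pi * Real.exp (2 * (x j - y' j))
      - 2 * Real.pi * prevWeight x j (y' j))
    (fun y' => (hasDerivAt_baxterKernel_y s x y' j).congr_deriv (by ring))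
    (by simpa only [update_self] using hψ)]
  push_cast
  ring

end BaxterKernel

open BaxterKernel in
/-- The differential identity for the Baxter kernel expressing the commutation
of the Baxter operator with the quadratic quantum Toda Hamiltonian:
`Σ_j [−(1/2)(∂/∂x_j + ρ_j)² Q](x,y|s) + 4π² Σ_k e^{2(x_{k+1}−x_k)} Q(x,y|s)
 = Σ_j [−(1/2)(∂/∂y_j − ρ_j)² Q](x,y|s) + 4π² Σ_k e^{2(y_{k+1}−y_k)} Q(x,y|s)`. -/
theorem baxterKernel_toda_commutation (ℓ : ℕ) (s : ℂ) (x y : Fin (ℓ+1) → ℝ) :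
    (∑ j : Fin (ℓ+1), (-(1/2 : ℂ)) *
        shiftedD ℓ (fun j => ((ℓ : ℂ)/2 + 1 - ((j : ℕ) + 1))) j
          (shiftedD ℓ (fun j => ((ℓ : ℂ)/2 + 1 - ((j : ℕ) + 1))) j
            (fun x' => baxterKernel ℓ x' y s)) x)
      + 4 * (Real.pi : ℂ)^2 * (∑ k : Fin ℓ,
          (Real.exp (2 * (x k.succ - x k.castSucc)) : ℂ)) * baxterKernel ℓ x y s
    = (∑ j : Fin (ℓ+1), (-(1/2 : ℂ)) *
        shiftedD ℓ (fun j => -((ℓ : ℂ)/2 + 1 - ((j : ℕ) + 1))) j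
          (shiftedD ℓ (fun j => -((ℓ : ℂ)/2 + 1 - ((j : ℕ) + 1))) j
            (fun y' => baxterKernel ℓ x y' s)) y)
      + 4 * (Real.pi : ℂ)^2 * (∑ k : Fin ℓ,
          (Real.exp (2 * (y k.succ - y k.castSucc)) : ℂ)) * baxterKernel ℓ x y s := by
  have h₁ : ∑ j, nextWeight y j (x j) = ∑ j, prevWeight x j (y j) := by
    simpa using
      (sum_nextWeight_pow x y one_ne_zero).trans (sum_prevWeight_pow x y one_ne_zero).symm
  have h₂ : ∑ j, nextWeight y j (x j) ^ 2 = ∑ j, prevWeight x j (y j) ^ 2 :=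
    (sum_nextWeight_pow x y two_ne_zero).trans (sum_prevWeight_pow x y two_ne_zero).symm
  rw [← sum_mul_prevWeight, ← sum_mul_nextWeight]
  simp only [shiftedD_sq_baxterKernel_x, shiftedD_sq_baxterKernel_y, ← mul_assoc (-(1/2 : ℂ)),
    ← sum_mul]
  linear_combination (baxterKernel ℓ x y s) * sum_toda_quadratic_eq (Real.pi : ℂ) (I * s)
    (fun j => (Real.exp (2 * (x j - y j)) : ℂ)) _ _ h₁ h₂
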